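/- arXiv:2009.05377 — 5 statements merged into one kernel-verified Lean document; each statement's English description precedes it below -/
import Mathlib

section
/- Let K, k, z be positive integers with K - k*z even and K - k*z ≥ 2. Then 2 * ∑_{r = (K-k*z)/2 + 1}^{K-k*z} 1/(1 + ⌈k*z/r⌉) ≤ (K - k*z)^2 / K. -/
/-! Since `⌈c / r⌉ ≥ c / r`, the `r`-th summand is at most `r / (r + c)`, which increases in `r`
and so is at most `m / (m + c) = m / K` for `r ≤ m = K - c`. The sum has `m / 2` terms, so twice
it is at most `m · m / K`. -/

section

variable {α : Type*} [Field α] [LinearOrder α] [IsStrictOrderedRing α]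

lemma one_div_one_add_ceil_div_le [FloorRing α] {c r : α} (hc : 0 ≤ c) (hr : 0 < r) :
    1 / (1 + (⌈c / r⌉ : α)) ≤ r / (r + c) := by
  have hpos : 0 < 1 + c / r := by positivity
  calc 1 / (1 + (⌈c / r⌉ : α)) ≤ 1 / (1 + c / r) :=
        one_div_le_one_div_of_le hpos (by linarith [Int.le_ceil (c / r)])
    _ = r / (r + c) := by field_simp

lemma div_add_le_div_add_of_le {c r m : α} (hc : 0 ≤ c) (hr : 0 < r) (hrm : r ≤ m) :
    r / (r + c) ≤ m / (m + c) := by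
  rw [div_le_div_iff₀ (by positivity) (by linarith)]
  nlinarith

end

lemma card_Icc_half_add_one_self {m : ℕ} (hm : Even m) :
    (Finset.Icc (m / 2 + 1) m).card = m / 2 := by
  rw [Nat.card_Icc]
  obtain ⟨t, rfl⟩ := hm
  omega

theorem stmt_0_general (K k z : ℕ)
    (hlt : k * z < K) (heven : Even (K - k * z)) :
    2 * ∑ r ∈ Finset.Icc ((K - k * z) / 2 + 1) (K - k * z),
        (1 : ℚ) / (1 + (⌈(k * z : ℚ) / (r : ℚ)⌉ : ℚ))
      ≤ ((K - k * z : ℕ) : ℚ) ^ 2 / (K : ℚ) := by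
  rw [show (k * z : ℚ) = ((k * z : ℕ) : ℚ) by push_cast; rfl]
  set c := k * z
  set m := K - c
  have hK : (K : ℚ) = m + c := by exact_mod_cast (Nat.sub_add_cancel hlt.le).symm
  have hterm : ∀ r ∈ Finset.Icc (m / 2 + 1) m,
      (1 : ℚ) / (1 + (⌈(c : ℚ) / (r : ℚ)⌉ : ℚ)) ≤ (m : ℚ) / K := by
    intro r hr
    obtain ⟨hr1, hrm⟩ := Finset.mem_Icc.mp hr
    have hr0 : (0 : ℚ) < r := by exact_mod_cast (by omega : 0 < r)
    rw [hK]
    exact (one_div_one_add_ceil_div_le c.cast_nonneg hr0).trans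
      (div_add_le_div_add_of_le c.cast_nonneg hr0 (by exact_mod_cast hrm))
  have hhalf : ((m / 2 : ℕ) : ℚ) * 2 = m := by
    exact_mod_cast Nat.div_two_mul_two_of_even heven
  calc 2 * ∑ r ∈ Finset.Icc (m / 2 + 1) m, (1 : ℚ) / (1 + (⌈(c : ℚ) / (r : ℚ)⌉ : ℚ))
      ≤ 2 * ((Finset.Icc (m / 2 + 1) m).card • ((m : ℚ) / K)) := by
        gcongr; exact Finset.sum_le_card_nsmul _ _ _ hterm
    _ = ((m : ℕ) : ℚ) ^ 2 / K := by
        rw [card_Icc_half_add_one_self heven, nsmul_eq_mul, ← hhalf]; ring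

theorem stmt_0 (K k z : ℕ) (hK : 0 < K) (hk : 0 < k) (hz : 0 < z)
    (hlt : k * z < K) (heven : Even (K - k * z)) (h2 : 2 ≤ K - k * z) :
    2 * ∑ r ∈ Finset.Icc ((K - k * z) / 2 + 1) (K - k * z),
        (1 : ℚ) / (1 + (⌈(k * z : ℚ) / (r : ℚ)⌉ : ℚ))
      ≤ ((K - k * z : ℕ) : ℚ) ^ 2 / (K : ℚ) :=
  stmt_0_general K k z hlt heven
end

section
/- Let K, k, z be positive integers with K - k*z odd and K - k*z > 1. Then 1/(1 + ⌈2*k*z/(K - k*z + 1)⌉) + 2 * ∑_{r = (K-k*z+3)/2}^{K-k*z} 1/(1 + ⌈k*z/r⌉) ≤ (K - k*z)^2 / K. -/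
/-!
Write `n = k z` and `K - n = m = 2j + 1`. Since `⌈n / r⌉ ≥ n / r`, every term satisfies
`1 / (1 + ⌈n / r⌉) ≤ r / (r + n) ≤ m / (m + n)` for `0 < r ≤ m`, and the first term is the one
at `r = j + 1` because `2n / (m + 1) = n / (j + 1)`. The left side therefore has `1 + 2j = m`
terms, each at most `m / K`.
-/

open Finset

theorem one_div_one_add_ceil_div_le_s1 {α : Type*} [Field α] [LinearOrder α] [IsStrictOrderedRing α]
    [FloorRing α] {n x y : α} (hn : 0 ≤ n) (hx : 0 < x) (hxy : x ≤ y) :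
    1 / (1 + (⌈n / x⌉ : α)) ≤ y / (y + n) := by
  calc 1 / (1 + (⌈n / x⌉ : α)) ≤ 1 / (1 + n / x) := by
        gcongr
        exact Int.le_ceil _
    _ = x / (x + n) := by field_simp
    _ ≤ y / (y + n) := by
        rw [div_le_div_iff₀ (by positivity) (by linarith)]
        nlinarith

theorem one_div_one_add_ceil_sum_le_sq_div (n j : ℕ) :
    (1 : ℚ) / (1 + (⌈(n : ℚ) / (j + 1)⌉ : ℚ))
      + 2 * ∑ r ∈ Icc (j + 2) (2 * j + 1), (1 : ℚ) / (1 + (⌈(n : ℚ) / r⌉ : ℚ))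
      ≤ (2 * j + 1 : ℚ) ^ 2 / (n + (2 * j + 1)) := by
  set b : ℚ := (2 * j + 1) / (2 * j + 1 + n) with hb
  have hn : (0 : ℚ) ≤ n := n.cast_nonneg
  have hfirst : (1 : ℚ) / (1 + (⌈(n : ℚ) / (j + 1)⌉ : ℚ)) ≤ b :=
    one_div_one_add_ceil_div_le_s1 hn (by positivity) (by linarith [(j.cast_nonneg : (0 : ℚ) ≤ j)])
  have hterm : ∀ r ∈ Icc (j + 2) (2 * j + 1), (1 : ℚ) / (1 + (⌈(n : ℚ) / r⌉ : ℚ)) ≤ b := by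
    intro r hr
    have hr := mem_Icc.mp hr
    exact one_div_one_add_ceil_div_le_s1 hn (Nat.cast_pos.mpr (by omega)) (by exact_mod_cast hr.2)
  have hcard : #(Icc (j + 2) (2 * j + 1)) = j := by simp only [Nat.card_Icc]; omega
  have hsum : ∑ r ∈ Icc (j + 2) (2 * j + 1), (1 : ℚ) / (1 + (⌈(n : ℚ) / r⌉ : ℚ)) ≤ j * b := by
    simpa only [hcard, nsmul_eq_mul] using sum_le_card_nsmul _ _ _ hterm
  calc _ ≤ b + 2 * (j * b) := by linarith
    _ = _ := by rw [hb]; field_simp; ring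

theorem stmt_1_general (K k z : ℕ) (hodd : Odd (K - k * z)) :
    (1 : ℚ) / (1 + (⌈(2 * k * z : ℚ) / ((K : ℚ) - k * z + 1)⌉ : ℚ))
      + 2 * ∑ r ∈ Finset.Icc ((K - k * z + 3) / 2) (K - k * z),
          (1 : ℚ) / (1 + (⌈(k * z : ℚ) / (r : ℚ)⌉ : ℚ))
      ≤ ((K - k * z : ℕ) : ℚ) ^ 2 / (K : ℚ) := by
  obtain ⟨j, hj⟩ := hodd
  obtain ⟨n, hn⟩ : ∃ n, n = k * z := ⟨_, rfl⟩
  have hK : K = n + (2 * j + 1) := by omega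
  have hlo : (K - k * z + 3) / 2 = j + 2 := by omega
  have hnq : (k : ℚ) * z = n := by rw [hn, Nat.cast_mul]
  have hden : (K : ℚ) - k * z + 1 = 2 * (j + 1) := by
    rw [hnq, hK]
    push_cast
    ring
  have hfirst : (2 * k * z : ℚ) / ((K : ℚ) - k * z + 1) = n / (j + 1) := by
    rw [hden, mul_assoc, hnq]
    field_simp
  rw [hfirst, hlo, hj, hnq, hK]
  push_cast
  exact one_div_one_add_ceil_sum_le_sq_div n j

theorem stmt_1 (K k z : ℕ) (hK : 0 < K) (hk : 0 < k) (hz : 0 < z)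
    (hlt : k * z < K) (hodd : Odd (K - k * z)) (h1 : 1 < K - k * z) :
    (1 : ℚ) / (1 + (⌈(2 * k * z : ℚ) / ((K : ℚ) - k * z + 1)⌉ : ℚ))
      + 2 * ∑ r ∈ Finset.Icc ((K - k * z + 3) / 2) (K - k * z),
          (1 : ℚ) / (1 + (⌈(k * z : ℚ) / (r : ℚ)⌉ : ℚ))
      ≤ ((K - k * z : ℕ) : ℚ) ^ 2 / (K : ℚ) :=
  stmt_1_general K k z hodd
end

section
/- Let k, z, r be positive integers and p = ⌈k*z/r⌉ + 1. For any l with 1 ≤ l ≤ p/2 - 1 (p even) and any i with 1 ≤ i ≤ l, if r ≥ (K - k*z)/2 + 1 and r ≤ K - k*z (K, k, z positive integers, K - kz even positive), then the residue kα - (i+1)r mod K lies in the set {kα+1, kα+2, ..., kα+kz-2} mod K of indices cached by user α. -/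
theorem stmt_10 (K k z r : ℕ) (hK : 0 < K) (hk : 0 < k) (hz : 0 < z) (hr : 0 < r)
    (heven : Even (K - k * z)) (hpos : 0 < K - k * z) (hlt : k * z < K)
    (hr1 : (K - k * z) / 2 + 1 ≤ r) (hr2 : r ≤ K - k * z)
    (p : ℤ) (hp : p = ⌈(k * z : ℚ) / (r : ℚ)⌉ + 1) (hpe : Even p)
    (l i : ℕ) (hl1 : 1 ≤ l) (hl2 : (l : ℤ) ≤ p / 2 - 1) (hi1 : 1 ≤ i) (hi2 : i ≤ l)
    (α : ZMod K) :
    ∃ m : ℕ, 1 ≤ m ∧ m ≤ k * z - 2 ∧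
      (k : ZMod K) * α - ((i + 1) * r : ℕ) = (k : ZMod K) * α + (m : ZMod K) := by
  -- p is even, write p = q + q
  obtain ⟨q, hq⟩ := hpe
  have hq2 : p / 2 = q := by omega
  -- i + 1 ≤ q and q ≤ p - 2
  have hiq : (i : ℤ) + 1 ≤ q := by
    have := hi2
    have : (i : ℤ) ≤ l := by exact_mod_cast hi2
    omega
  have hql : (1 : ℤ) ≤ q - 1 := by
    have : (1 : ℤ) ≤ l := by exact_mod_cast hl1
    omega
  have hip : (i : ℤ) + 1 ≤ p - 2 := by omega
  -- ceiling bound: (p - 2) * r < k * z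
  have hceil : (p : ℤ) - 2 < ⌈(k * z : ℚ) / (r : ℚ)⌉ := by omega
  have hrQ : (0 : ℚ) < (r : ℚ) := by exact_mod_cast hr
  have h1 : ((p : ℚ) - 2) < (k * z : ℚ) / (r : ℚ) := by
    have := Int.lt_ceil.mp hceil
    push_cast at this ⊢
    linarith
  have h2 : ((p : ℚ) - 2) * r < (k * z : ℚ) := by
    rw [div_eq_mul_inv] at h1
    calc ((p : ℚ) - 2) * r < ((k * z : ℚ) * (r : ℚ)⁻¹) * r := by
          exact mul_lt_mul_of_pos_right h1 hrQ
      _ = (k * z : ℚ) := by field_simp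
  have h3 : ((i : ℚ) + 1) * r ≤ ((p : ℚ) - 2) * r := by
    have : ((i : ℚ) + 1) ≤ ((p : ℚ) - 2) := by exact_mod_cast hip
    exact mul_le_mul_of_nonneg_right this (le_of_lt hrQ)
  have hub : (i + 1) * r < k * z := by
    have : ((i : ℚ) + 1) * r < (k * z : ℚ) := lt_of_le_of_lt h3 h2
    exact_mod_cast this
  -- lower bound: (i+1)*r ≥ K - k*z + 2
  have hdiv : 2 * ((K - k * z) / 2) = K - k * z := by
    obtain ⟨c, hc⟩ := heven
    omega
  have hlb : K - k * z + 2 ≤ (i + 1) * r := by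
    have h2r : K - k * z + 2 ≤ 2 * r := by omega
    have : 2 * r ≤ (i + 1) * r := Nat.mul_le_mul_right r (by omega)
    omega
  -- choose m
  refine ⟨K - (i + 1) * r, by omega, by omega, ?_⟩
  have hle : (i + 1) * r ≤ K := by omega
  have hcast : ((K - (i + 1) * r : ℕ) : ZMod K) = (K : ZMod K) - ((i + 1) * r : ℕ) := by
    push_cast [Nat.cast_sub hle]
    ring
  rw [hcast, ZMod.natCast_self]
  ring
end

section
/- Let K, k, z be positive integers with K - k*z even and positive, t = (K-kz)/2 + 1, and fix r ∈ [t, 2t-2]. In Algorithm 1 with p = ⌈kz/r⌉+1 even, for each l ∈ [0, p/2 - 1] the coded symbol T_{kα-(l+1)r} contains the part W_{kα-r, l}^{d(α)} and all other parts appearing in it have indices in the accessible set {kα, kα+1, ..., kα+kz-1} mod K, so user α can decode W_{kα-r, l}^{d(α)}. -/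
/-!
Write `K = kz + 2e`, so `t = e + 1` and `e < r ≤ 2e`. Relative to `j = kα - (l+1)r`, the part in
position `i` of `T_j` has index `kα + (i - l - 1)r`. Since `p - 1 = ⌈kz/r⌉` we have `pr < kz + 2r`.
For `l < i < p` the offset `(i - l - 1)r ≤ (p - 2)r` is below `kz`. For `i < l` the index lies
`d = (l + 1 - i)r` before `kα`, with `2e < 2r ≤ d` and `2d ≤ pr < kz + 4e ≤ 2K`; so `K - d < kz`
and the index is `kα + (K - d)`, again in the window `kα, …, kα + kz - 1`.
-/

theorem mul_lt_add_two_mul_of_eq_ceil_div_add_one {n r p : ℕ} (hr : 0 < r)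
    (hp : (p : ℤ) = ⌈(n : ℚ) / r⌉ + 1) : p * r < n + 2 * r := by
  have hr' : (0 : ℚ) < r := by exact_mod_cast hr
  have hceil : ((p : ℤ) : ℚ) < n / r + 2 := by
    rw [hp]
    push_cast
    linarith [Int.ceil_lt_add_one ((n : ℚ) / r)]
  have hmul : (p : ℚ) * r < n + 2 * r := by
    rw [← lt_div_iff₀ hr', add_div, mul_div_cancel_right₀ _ hr'.ne']
    exact_mod_cast hceil
  exact_mod_cast hmul

theorem sub_mul_lt_of_lt_of_lt {n r p l i : ℕ} (hpr : p * r < n + 2 * r) (hli : l < i)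
    (hip : i < p) : i * r - (l + 1) * r < n := by
  have hi : (i + 1) * r ≤ p * r := Nat.mul_le_mul_right r hip
  have hl : (l + 1) * r ≤ i * r := Nat.mul_le_mul_right r hli
  have hr : (l + 1) * r = l * r + r := add_one_mul l r
  rw [add_one_mul] at hi
  omega

theorem two_mul_lt_and_le_of_lt {n e r p l i : ℕ} (hpr : p * r < n + 2 * r) (her : e < r)
    (hre : r ≤ 2 * e) (hlp : 2 * (l + 1) ≤ p) (hil : i < l) :
    2 * e < (l + 1) * r - i * r ∧ (l + 1) * r - i * r ≤ n + 2 * e := by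
  have hgap : (i + 2) * r ≤ (l + 1) * r := Nat.mul_le_mul_right r (by omega)
  have hhalf : 2 * ((l + 1) * r) ≤ p * r := by
    rw [← mul_assoc]
    exact Nat.mul_le_mul_right r hlp
  have hi : (i + 2) * r = i * r + 2 * r := by ring
  omega

theorem natCast_add_sub_natCast_of_le {K a b : ℕ} (x : ZMod K) (h : b ≤ a) :
    (a : ZMod K) + (x - b) = x + ((a - b : ℕ) : ZMod K) := by
  rw [Nat.cast_sub h]
  ring

theorem natCast_add_sub_natCast_of_ge {K a b : ℕ} (x : ZMod K) (h : a ≤ b) (hK : b - a ≤ K) :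
    (a : ZMod K) + (x - b) = x + ((K - (b - a) : ℕ) : ZMod K) := by
  rw [Nat.cast_sub hK, ZMod.natCast_self, Nat.cast_sub h]
  ring

theorem stmt_15_general (K k z r : ℕ)
    (heven : Even (K - k * z)) (hlt : k * z < K)
    (t : ℕ) (ht : t = (K - k * z) / 2 + 1) (hr1 : t ≤ r) (hr2 : r ≤ 2 * t - 2)
    (p : ℕ) (hp : (p : ℤ) = ⌈(k * z : ℚ) / (r : ℚ)⌉ + 1) (hpe : Even p)
    (l : ℕ) (hl : l ≤ p / 2 - 1) (α : ZMod K) :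
    let j : ZMod K := (k : ZMod K) * α - (((l + 1) * r : ℕ) : ZMod K)
    (((l * r : ℕ) : ZMod K) + j = (k : ZMod K) * α - (r : ZMod K)) ∧
    (∀ i < p, i ≠ l → ∃ m : ℕ, m < k * z ∧
        ((i * r : ℕ) : ZMod K) + j = (k : ZMod K) * α + (m : ZMod K)) := by
  intro j
  obtain ⟨e, he⟩ := heven
  have hK : K = k * z + 2 * e := by omega
  have hpr : p * r < k * z + 2 * r :=
    mul_lt_add_two_mul_of_eq_ceil_div_add_one (by omega) (by push_cast; exact hp)
  refine ⟨by simp only [j]; push_cast; ring, fun i hip hil => ?_⟩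
  rcases hil.lt_or_gt with hil | hli
  · obtain ⟨hd, hdK⟩ := two_mul_lt_and_le_of_lt hpr (e := e) (by omega) (by omega)
      (by obtain ⟨q, rfl⟩ := hpe; omega) hil
    exact ⟨K - ((l + 1) * r - i * r), by omega,
      natCast_add_sub_natCast_of_ge _ (Nat.mul_le_mul_right r (by omega)) (by omega)⟩
  · exact ⟨_, sub_mul_lt_of_lt_of_lt hpr hli hip,
      natCast_add_sub_natCast_of_le _ (Nat.mul_le_mul_right r (by omega))⟩

theorem stmt_15 (K k z r : ℕ) (hK : 0 < K) (hk : 0 < k) (hz : 0 < z) (hr : 0 < r)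
    (heven : Even (K - k * z)) (hpos : 0 < K - k * z) (hlt : k * z < K)
    (t : ℕ) (ht : t = (K - k * z) / 2 + 1) (hr1 : t ≤ r) (hr2 : r ≤ 2 * t - 2)
    (p : ℕ) (hp : (p : ℤ) = ⌈(k * z : ℚ) / (r : ℚ)⌉ + 1) (hpe : Even p)
    (l : ℕ) (hl : l ≤ p / 2 - 1) (α : ZMod K) :
    let j : ZMod K := (k : ZMod K) * α - (((l + 1) * r : ℕ) : ZMod K)
    (((l * r : ℕ) : ZMod K) + j = (k : ZMod K) * α - (r : ZMod K)) ∧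
    (∀ i < p, i ≠ l → ∃ m : ℕ, m < k * z ∧
        ((i * r : ℕ) : ZMod K) + j = (k : ZMod K) * α + (m : ZMod K)) :=
  stmt_15_general K k z r heven hlt t ht hr1 hr2 p hp hpe l hl α
end

section
/- Let K, k, z be positive integers with K = k*z + 1 (so K - kz = 1), t = 1, and p = ⌈kz/t⌉ + 1 = K. Then for each user α, the coded symbol T_j^0 = ⊕_{i=0}^{p-1} W_{it+j, i}^{d((i+1)t+j)/k)} with j = kα - (l+1)t contains exactly one part of the sub-file W_{kα - t}^{d(α)} not available to user α, and all other K-1 parts in the XOR have indices accessible to user α; hence user α decodes W_{kα-t}^{d(α)} from the K transmissions, giving total rate 1/K. -/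
/-!
In the coded symbol indexed by `l`, the part taken from sub-file `i` has index
`i + (kα - l - 1)`. For `i = l` this is `kα - 1`, the one index user `α` misses. For `i ≠ l`
the offset `i - l - 1` is not `-1` modulo `K = kz + 1`, so it is one of `0, …, kz - 1` and the
index lies in the window `kα, …, kα + kz - 1` of user `α`.
-/

theorem ZMod.exists_lt_natCast_eq_sub_sub_one {n i l : ℕ} (hi : i < n + 1) (hl : l < n + 1)
    (hne : i ≠ l) : ∃ m < n, (m : ZMod (n + 1)) = i - l - 1 := by
  set x : ZMod (n + 1) := i - l - 1
  refine ⟨x.val, ?_, ZMod.natCast_zmod_val x⟩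
  have hx : x ≠ -1 := by
    intro h
    have hcast : (i : ZMod (n + 1)) = l := by linear_combination h
    rw [ZMod.natCast_eq_natCast_iff', Nat.mod_eq_of_lt hi, Nat.mod_eq_of_lt hl] at hcast
    exact hne hcast
  have hval : x.val ≠ n := fun h =>
    hx (ZMod.val_injective _ (h.trans (ZMod.val_neg_one n).symm))
  have := ZMod.val_lt x
  omega

theorem stmt_16_general (K k z : ℕ) (hKe : K = k * z + 1) :
    (⌈(k * z : ℚ) / (1 : ℚ)⌉ + 1 = (K : ℤ)) ∧
    (∀ α : ZMod K, ∀ l < K,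
      ((((l : ZMod K)) + ((k : ZMod K) * α - ((l : ZMod K) + 1))
          = (k : ZMod K) * α - 1) ∧
       (∀ i < K, i ≠ l → ∃ m : ℕ, m < k * z ∧
          (i : ZMod K) + ((k : ZMod K) * α - ((l : ZMod K) + 1))
            = (k : ZMod K) * α + (m : ZMod K)))) ∧
    (K : ℚ) * (1 / ((K : ℚ) * (K : ℚ))) = 1 / (K : ℚ) := by
  subst hKe
  refine ⟨by simpa using Int.ceil_natCast (R := ℚ) (k * z),
    fun α l hl => ⟨by ring, fun i hi hne => ?_⟩, by field_simp⟩
  obtain ⟨m, hm, hcast⟩ := ZMod.exists_lt_natCast_eq_sub_sub_one hi hl hne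
  exact ⟨m, hm, by rw [hcast]; ring⟩

theorem stmt_16 (K k z : ℕ) (hK : 0 < K) (hk : 0 < k) (hz : 0 < z)
    (hKe : K = k * z + 1) :
    (⌈(k * z : ℚ) / (1 : ℚ)⌉ + 1 = (K : ℤ)) ∧
    (∀ α : ZMod K, ∀ l < K,
      ((((l : ZMod K)) + ((k : ZMod K) * α - ((l : ZMod K) + 1))
          = (k : ZMod K) * α - 1) ∧
       (∀ i < K, i ≠ l → ∃ m : ℕ, m < k * z ∧
          (i : ZMod K) + ((k : ZMod K) * α - ((l : ZMod K) + 1))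
            = (k : ZMod K) * α + (m : ZMod K)))) ∧
    (K : ℚ) * (1 / ((K : ℚ) * (K : ℚ))) = 1 / (K : ℚ) :=
  stmt_16_general K k z hKe
end
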